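/- Every factor of a rich word is rich. -/

import Mathlib

/-!
Appending a letter `a` to `w` creates at most one new palindromic factor: a new factor of
`w ++ [a]` is a suffix, and a palindromic suffix shorter than another palindromic suffix `q`
is also a prefix of `q`, hence already occurs in `w`. So `w ++ t` has at most `|t|` more
palindromic factors than `w`, and every word `w` has at most `|w| + 1`. For a rich word
`p ++ t` both bounds must be equalities, which makes `p` rich; reversal preserves
palindromic factors, so suffixes, and hence all factors, of rich words are rich.
-/

/-- The set of palindromic factors of a word `w` (including the empty word). -/
def palFactors {α : Type*} [DecidableEq α] (w : List α) : Finset (List α) :=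
  ((w.inits.flatMap List.tails).filter fun u => u.reverse = u).toFinset

/-- A word is rich if it has `|w| + 1` distinct palindromic factors
(including the empty word). -/
def Rich {α : Type*} [DecidableEq α] (w : List α) : Prop :=
  (palFactors w).card = w.length + 1

namespace List

variable {α : Type*}

theorem IsSuffix.dropLast {l₁ l₂ : List α} (h : l₁ <:+ l₂) (hne : l₁ ≠ []) :
    l₁.dropLast <:+ l₂.dropLast := by
  obtain ⟨s, rfl⟩ := h
  exact ⟨s, (dropLast_append_of_ne_nil hne).symm⟩

theorem infix_dropLast_of_palindrome_suffix {p q l : List α} (hp : p.reverse = p)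
    (hq : q.reverse = q) (hpl : p <:+ l) (hql : q <:+ l) (hlt : p.length < q.length) :
    p <:+: l.dropLast := by
  have hpq : p <+: q := by
    rw [← hp, ← hq, reverse_prefix]
    exact suffix_of_suffix_length_le hpl hql hlt.le
  have hp_dropLast : p <+: q.dropLast :=
    prefix_of_prefix_length_le hpq (dropLast_prefix q) (by rw [length_dropLast]; omega)
  have hq_ne : q ≠ [] := ne_nil_of_length_pos (by omega)
  exact hp_dropLast.isInfix.trans (hql.dropLast hq_ne).isInfix

end List

section palFactors

variable {α : Type*} [DecidableEq α]

theorem mem_palFactors {u w : List α} : u ∈ palFactors w ↔ u <:+: w ∧ u.reverse = u := by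
  simp only [palFactors, List.mem_toFinset, List.mem_filter, List.mem_flatMap,
    List.mem_inits, List.mem_tails, decide_eq_true_eq]
  constructor
  · rintro ⟨⟨p, hp, hs⟩, hpal⟩
    exact ⟨hs.isInfix.trans hp.isInfix, hpal⟩
  · rintro ⟨⟨s, t, rfl⟩, hpal⟩
    exact ⟨⟨s ++ u, ⟨t, rfl⟩, List.suffix_append s u⟩, hpal⟩

theorem palFactors_nil : palFactors ([] : List α) = {[]} := by
  ext u
  simp only [mem_palFactors, List.infix_nil, Finset.mem_singleton, and_iff_left_iff_imp]
  rintro rfl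
  rfl

theorem palFactors_mono {u w : List α} (h : u <:+: w) : palFactors u ⊆ palFactors w := by
  intro p hp
  rw [mem_palFactors] at hp ⊢
  exact ⟨hp.1.trans h, hp.2⟩

@[simp]
theorem palFactors_reverse (w : List α) : palFactors w.reverse = palFactors w := by
  ext u
  simp only [mem_palFactors, and_congr_left_iff]
  intro hpal
  rw [← List.reverse_infix, List.reverse_reverse, hpal]

theorem card_palFactors_concat_le (w : List α) (a : α) :
    (palFactors (w ++ [a])).card ≤ (palFactors w).card + 1 := by
  have h_new : ∀ p ∈ palFactors (w ++ [a]) \ palFactors w, p <:+ w ++ [a] ∧ p.reverse = p ∧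
      ¬ p <:+: w := by
    intro p hp
    simp only [Finset.mem_sdiff, mem_palFactors, List.infix_concat_iff] at hp
    obtain ⟨⟨hinf | hinf, hpal⟩, hnew⟩ := hp
    · exact ⟨hinf, hpal, fun h => hnew ⟨h, hpal⟩⟩
    · exact absurd ⟨hinf, hpal⟩ hnew
  have h_unique : ∀ p ∈ palFactors (w ++ [a]) \ palFactors w,
      ∀ q ∈ palFactors (w ++ [a]) \ palFactors w, p.length ≤ q.length → p = q := by
    intro p hp q hq hle
    obtain ⟨hps, hppal, hpnew⟩ := h_new p hp
    obtain ⟨hqs, hqpal, -⟩ := h_new q hq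
    rcases hle.lt_or_eq with hlt | heq
    · have := List.infix_dropLast_of_palindrome_suffix hppal hqpal hps hqs hlt
      rw [List.dropLast_concat] at this
      exact absurd this hpnew
    · exact (List.suffix_of_suffix_length_le hps hqs hle).eq_of_length heq
  have h_card_new : (palFactors (w ++ [a]) \ palFactors w).card ≤ 1 :=
    Finset.card_le_one.mpr fun p hp q hq =>
      (le_total p.length q.length).elim (h_unique p hp q hq) fun h => (h_unique q hq p hp h).symm
  have := Finset.card_sdiff_add_card_eq_card
    (palFactors_mono (List.prefix_append w [a]).isInfix : palFactors w ⊆ palFactors (w ++ [a]))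
  omega

theorem card_palFactors_append_le (w t : List α) :
    (palFactors (w ++ t)).card ≤ (palFactors w).card + t.length := by
  induction t using List.reverseRecOn with
  | nil => simp
  | append_singleton t a ih =>
    have := card_palFactors_concat_le (w ++ t) a
    rw [← List.append_assoc, List.length_append, List.length_singleton]
    omega

theorem card_palFactors_le (w : List α) : (palFactors w).card ≤ w.length + 1 := by
  simpa [palFactors_nil, add_comm] using card_palFactors_append_le [] w

end palFactors

section Rich

variable {α : Type*} [DecidableEq α]

theorem Rich.reverse {w : List α} (hw : Rich w) : Rich w.reverse := by
  rwa [Rich, palFactors_reverse, List.length_reverse]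

theorem Rich.of_prefix {p w : List α} (hw : Rich w) (hp : p <+: w) : Rich p := by
  obtain ⟨t, rfl⟩ := hp
  have h_append := card_palFactors_append_le p t
  have h_le := card_palFactors_le p
  rw [Rich, List.length_append] at hw
  rw [Rich]
  omega

theorem Rich.of_suffix {s w : List α} (hw : Rich w) (hs : s <:+ w) : Rich s := by
  simpa using (hw.reverse.of_prefix (List.reverse_prefix.mpr hs)).reverse

end Rich

/-- every factor of a rich word is rich. -/
theorem stmt_14 {α : Type*} [DecidableEq α] (w u : List α) (hrich : Rich w)
    (hu : u <:+: w) : Rich u := by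
  obtain ⟨s, t, rfl⟩ := hu
  exact (hrich.of_prefix (List.prefix_append (s ++ u) t)).of_suffix (List.suffix_append s u)
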